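/- arXiv:1712.00737 — 4 statements merged into one kernel-verified Lean document; each statement's English description precedes it below -/
import Mathlib

section
/- Let c > 0, x ≥ 1 be real and z a complex number with Re z > 0. Then (1/2πi) ∫_{(c)} Γ(s) x^{-s} / Γ(s+z+1) ds = 0, where the integral is over the vertical line Re s = c. -/
open Complex MeasureTheory intervalIntegral Set Filter Real

namespace Stmt2Aux

lemma beta_decay (c : ℝ) (hc : 0 < c) (z : ℂ) (hz : 0 < z.re) :
    ∃ C : ℝ, ∀ t : ℝ, 1 ≤ |t| →
      ‖Complex.Gamma (c + t * I) / Complex.Gamma ((c + t * I) + z + 1)‖ ≤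
        C * |t| ^ (-1 - min z.re 2⁻¹) := by
  set a : ℝ := min z.re 2⁻¹ with ha_def
  have ha : 0 < a := lt_min hz (by norm_num)
  have ha2 : a ≤ 2⁻¹ := min_le_right _ _
  have haz : a ≤ z.re := min_le_left _ _
  have ha1 : a < 1 := lt_of_le_of_lt ha2 (by norm_num)
  set K : ℝ := 1/a + 1 + ‖z - 1‖ / (1 - a) with hK_def
  have hΓz : Complex.Gamma z ≠ 0 := Complex.Gamma_ne_zero_of_re_pos hz
  refine ⟨K / ‖Complex.Gamma z‖, fun t ht => ?_⟩
  have ht0 : (0:ℝ) < |t| := lt_of_lt_of_le one_pos ht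
  set δ : ℝ := |t|⁻¹ with hδ_def
  have hδ0 : 0 < δ := inv_pos.mpr ht0
  have hδ1 : δ ≤ 1 := by
    rw [hδ_def]
    exact inv_le_one_of_one_le₀ ht
  set s : ℂ := (c : ℂ) + t * I with hs_def
  have hsre : s.re = c := by simp [hs_def]
  have hsim : s.im = t := by simp [hs_def]
  have hs0 : s ≠ 0 := by
    intro h
    rw [h] at hsre
    simp at hsre
    linarith
  have hs1re : (s + 1).re = c + 1 := by simp [hsre]
  have habs_s : |t| ≤ ‖s‖ := by
    simpa [hsim] using Complex.abs_im_le_norm s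
  have habs_s1 : |t| ≤ ‖s + 1‖ := by
    have := Complex.abs_im_le_norm (s + 1)
    simpa [hsim] using this
  have hs1ne : s + 1 ≠ 0 := by
    intro h
    have : (s+1).re = 0 := by rw [h]; simp
    rw [hs1re] at this; linarith
  -- identity
  have hΓd : Complex.Gamma (s + z + 1) ≠ 0 := by
    apply Complex.Gamma_ne_zero_of_re_pos
    simp [Complex.add_re, hsre]
    linarith
  have hbeta := Complex.Gamma_mul_Gamma_eq_betaIntegral
    (s := s + 1) (t := z) (by rw [hs1re]; linarith) hz
  have hΓs1 : Complex.Gamma (s + 1) = s * Complex.Gamma s := Complex.Gamma_add_one s hs0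
  have key : Complex.Gamma s / Complex.Gamma (s + z + 1)
      = Complex.betaIntegral (s + 1) z / (s * Complex.Gamma z) := by
    have h1 : s + 1 + z = s + z + 1 := by ring
    rw [hΓs1, h1] at hbeta
    field_simp
    linear_combination hbeta
  -- the beta integral as an interval integral
  set g : ℝ → ℂ := fun x => (x : ℂ) ^ s * (1 - (x : ℂ)) ^ (z - 1) with hg_def
  have hgint : IntervalIntegrable g volume 0 1 := by
    have := Complex.betaIntegral_convergent (u := s + 1) (v := z) (by rw [hs1re]; linarith) hz
    simpa [hg_def, add_sub_cancel_right] using this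
  have hBrepr : Complex.betaIntegral (s + 1) z = ∫ x in (0:ℝ)..1, g x := by
    rw [Complex.betaIntegral]
    congr 1
    ext x
    rw [add_sub_cancel_right]
  have h01 : (0:ℝ) ≤ 1 - δ := by linarith
  have h11 : 1 - δ ≤ 1 := by linarith
  have hsub1 : uIcc (0:ℝ) (1 - δ) ⊆ uIcc (0:ℝ) 1 := by
    rw [uIcc_of_le h01, uIcc_of_le zero_le_one]
    exact Icc_subset_Icc le_rfl h11
  have hsub2 : uIcc (1 - δ) (1:ℝ) ⊆ uIcc (0:ℝ) 1 := by
    rw [uIcc_of_le h11, uIcc_of_le zero_le_one]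
    exact Icc_subset_Icc h01 le_rfl
  have hsplit : ∫ x in (0:ℝ)..1, g x
      = (∫ x in (0:ℝ)..(1 - δ), g x) + ∫ x in (1 - δ)..1, g x :=
    (intervalIntegral.integral_add_adjacent_intervals
      (hgint.mono_set hsub1) (hgint.mono_set hsub2)).symm
  -- tail bound
  have htail : ‖∫ x in (1 - δ)..1, g x‖ ≤ δ ^ a / a := by
    have hne1 : ∀ᵐ (x : ℝ), x ≠ (1:ℝ) := by
      rw [ae_iff]
      have : {x : ℝ | ¬x ≠ 1} = {1} := by ext x; simp
      rw [this]
      exact Real.volume_singleton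
    have hbound_int : IntervalIntegrable (fun x : ℝ => (1 - x) ^ (a - 1)) volume (1 - δ) 1 := by
      have := (intervalIntegral.intervalIntegrable_rpow' (a := δ) (b := 0)
        (r := a - 1) (by linarith)).comp_sub_left 1
      simpa using this
    have hae : ∀ᵐ (x : ℝ) ∂volume.restrict (Set.uIoc (1 - δ) 1), ‖g x‖ ≤ (1 - x) ^ (a - 1) := by
      filter_upwards [ae_restrict_mem measurableSet_uIoc, ae_restrict_of_ae hne1] with x hx hx1
      rw [uIoc_of_le h11] at hx
      have hx0 : 0 < x := lt_of_le_of_lt h01 hx.1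
      have hxlt : x < 1 := lt_of_le_of_ne hx.2 hx1
      have h1x0 : 0 < 1 - x := by linarith
      have hcast : (1:ℂ) - (x:ℂ) = ((1 - x : ℝ) : ℂ) := by push_cast; ring
      rw [hg_def]
      simp only [norm_mul]
      rw [Complex.norm_cpow_eq_rpow_re_of_pos hx0, hcast,
        Complex.norm_cpow_eq_rpow_re_of_pos h1x0]
      have h1 : x ^ s.re ≤ 1 := by
        rw [hsre]
        exact Real.rpow_le_one hx0.le hx.2 hc.le
      have h2 : (1 - x) ^ (z - 1).re ≤ (1 - x) ^ (a - 1) := by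
        rw [Complex.sub_re, Complex.one_re]
        exact Real.rpow_le_rpow_of_exponent_ge h1x0 (by linarith) (by linarith)
      calc x ^ s.re * (1 - x) ^ (z - 1).re
          ≤ 1 * ((1 - x) ^ (a - 1)) := by
            apply mul_le_mul h1 h2 (Real.rpow_nonneg h1x0.le _) zero_le_one
        _ = (1 - x) ^ (a - 1) := one_mul _
    refine le_trans (intervalIntegral.norm_integral_le_abs_of_norm_le hae hbound_int) ?_
    have hcomp : ∫ x in (1 - δ)..1, (1 - x) ^ (a - 1) = ∫ x in (0:ℝ)..δ, x ^ (a - 1) := by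
      have := intervalIntegral.integral_comp_sub_left (a := 1 - δ) (b := 1)
        (fun x : ℝ => x ^ (a - 1)) 1
      simpa using this
    rw [hcomp, integral_rpow (Or.inl (by linarith : (-1:ℝ) < a - 1))]
    rw [sub_add_cancel, Real.zero_rpow ha.ne', sub_zero]
    rw [_root_.abs_of_nonneg (by positivity)]
  -- main part via integration by parts
  set h2 : ℝ → ℂ := fun x => (x : ℂ) ^ (s + 1) * (1 - (x : ℂ)) ^ (z - 1 - 1) with hh2_def
  have hcontpow : ∀ w : ℂ, 0 < w.re →
      ContinuousOn (fun x : ℝ => (x : ℂ) ^ w) (Icc (0:ℝ) (1 - δ)) := by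
    intro w hw
    apply continuousOn_of_forall_continuousAt
    intro x hx
    exact (continuousAt_cpow_const_of_re_pos (Or.inl (by simpa using hx.1)) hw).comp
      Complex.continuous_ofReal.continuousAt
  have hcontsub : ∀ w : ℂ, ContinuousOn (fun x : ℝ => (1 - (x : ℂ)) ^ w) (Icc (0:ℝ) (1 - δ)) := by
    intro w
    apply continuousOn_of_forall_continuousAt
    intro x hx
    apply ContinuousAt.cpow ((continuous_const.sub Complex.continuous_ofReal).continuousAt)
      continuousAt_const
    norm_cast
    show (1:ℂ) - (x:ℂ) ∈ Complex.slitPlane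
    rw [show (1:ℂ) - (x:ℂ) = ((1 - x : ℝ) : ℂ) by push_cast; ring]
    exact Complex.ofReal_mem_slitPlane.2 (by linarith [hx.2, hδ0])
  set F : ℝ → ℂ := fun x => (x : ℂ) ^ (s + 1) * (1 - (x : ℂ)) ^ (z - 1) with hF_def
  have hs1repos : 0 < (s + 1).re := by rw [hs1re]; linarith
  have hFc : ContinuousOn F (Icc 0 (1 - δ)) := (hcontpow (s+1) hs1repos).mul (hcontsub (z-1))
  have hder : ∀ x ∈ Ioo (0:ℝ) (1 - δ),
      HasDerivAt F ((s+1) * g x - (z-1) * h2 x) x := by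
    intro x hx
    have hx0 : (0:ℝ) < x := hx.1
    have hx1 : x < 1 := by linarith [hx.2, hδ0]
    have U : HasDerivAt (fun y : ℂ => y ^ (s+1)) ((s+1) * (x:ℂ) ^ s) ↑x := by
      have := @HasDerivAt.cpow_const _ _ _ (s+1) (hasDerivAt_id (x:ℂ))
        (Or.inl (by simpa using hx0))
      simpa [id_eq, mul_one, add_sub_cancel_right] using this
    have V : HasDerivAt (fun y : ℂ => (1 - y) ^ (z-1)) (-(z-1) * (1-(x:ℂ)) ^ (z-1-1)) ↑x := by
      have A := @HasDerivAt.cpow_const _ _ _ (z-1) (hasDerivAt_id (1 - (x:ℂ)))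
        (Or.inl (by simp; linarith))
      simp_rw [id] at A
      have B : HasDerivAt (fun y : ℂ => 1 - y) (-1) ↑x := by
        apply HasDerivAt.const_sub; apply hasDerivAt_id
      have C := HasDerivAt.comp (x:ℂ) A B
      exact C.congr_deriv (by ring)
    have := (U.mul V).comp_ofReal
    convert this using 1
    · rfl
    rw [hg_def, hh2_def]
    ring
  have hh2c : ContinuousOn h2 (Icc 0 (1 - δ)) := (hcontpow (s+1) hs1repos).mul (hcontsub (z-1-1))
  have hh2int : IntervalIntegrable h2 volume 0 (1 - δ) := by
    apply ContinuousOn.intervalIntegrable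
    rwa [uIcc_of_le h01]
  have hg1int : IntervalIntegrable g volume 0 (1 - δ) := hgint.mono_set hsub1
  have hint' : IntervalIntegrable (fun x => (s+1) * g x - (z-1) * h2 x) volume 0 (1 - δ) :=
    (hg1int.const_mul (s+1)).sub (hh2int.const_mul (z-1))
  have hFTC := intervalIntegral.integral_eq_sub_of_hasDerivAt_of_le h01 hFc hder hint'
  have hF0 : F 0 = 0 := by
    rw [hF_def]
    simp [Complex.zero_cpow hs1ne]
  have hlin : ∫ x in (0:ℝ)..(1-δ), ((s+1) * g x - (z-1) * h2 x)
      = (s+1) * (∫ x in (0:ℝ)..(1-δ), g x) - (z-1) * ∫ x in (0:ℝ)..(1-δ), h2 x := by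
    rw [intervalIntegral.integral_sub (hg1int.const_mul _) (hh2int.const_mul _),
      intervalIntegral.integral_const_mul, intervalIntegral.integral_const_mul]
  have e1 : (s+1) * (∫ x in (0:ℝ)..(1-δ), g x) - (z-1) * (∫ x in (0:ℝ)..(1-δ), h2 x)
      = F (1-δ) := by rw [← hlin, hFTC, hF0, sub_zero]
  have hmainid : ∫ x in (0:ℝ)..(1-δ), g x
      = (F (1-δ) + (z-1) * ∫ x in (0:ℝ)..(1-δ), h2 x) / (s+1) := by
    rw [eq_div_iff hs1ne]
    linear_combination e1
  -- bound on F (1-δ)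
  have hbF : ‖F (1-δ)‖ ≤ δ ^ (a-1) := by
    rcases eq_or_lt_of_le hδ1 with h | h
    · have h10 : (1:ℝ) - δ = 0 := by rw [h]; ring
      rw [hF_def, h10]
      simp only [Complex.ofReal_zero, Complex.zero_cpow hs1ne, zero_mul, norm_zero]
      exact Real.rpow_nonneg hδ0.le _
    · have hpos : 0 < 1 - δ := by linarith
      rw [hF_def]
      have hcast : (1:ℂ) - ((1-δ:ℝ):ℂ) = ((δ:ℝ):ℂ) := by push_cast; ring
      simp only [norm_mul]
      rw [Complex.norm_cpow_eq_rpow_re_of_pos hpos, hcast,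
        Complex.norm_cpow_eq_rpow_re_of_pos hδ0]
      have h1 : (1-δ) ^ (s+1).re ≤ 1 :=
        Real.rpow_le_one hpos.le (by linarith) (by rw [hs1re]; linarith)
      have h2' : δ ^ (z-1).re ≤ δ ^ (a-1) := by
        rw [Complex.sub_re, Complex.one_re]
        exact Real.rpow_le_rpow_of_exponent_ge hδ0 hδ1 (by linarith)
      calc (1-δ) ^ (s+1).re * δ ^ (z-1).re
          ≤ 1 * δ ^ (a-1) :=
            mul_le_mul h1 h2' (Real.rpow_nonneg hδ0.le _) zero_le_one
        _ = δ ^ (a-1) := one_mul _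
  -- bound on ∫ h2
  have hbh2 : ‖∫ x in (0:ℝ)..(1-δ), h2 x‖ ≤ δ ^ (a-1) / (1-a) := by
    have hbint : IntervalIntegrable (fun x : ℝ => (1-x) ^ (a-2)) volume 0 (1-δ) := by
      apply ContinuousOn.intervalIntegrable
      rw [uIcc_of_le h01]
      apply ContinuousOn.rpow_const (continuous_const.sub continuous_id).continuousOn
      intro x hx
      left
      have : x ≤ 1 - δ := hx.2
      simp only [Pi.sub_apply, id_eq]
      intro h0
      have : (1:ℝ) - x > 0 := by linarith [hδ0]
      linarith [h0 ▸ this]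
    have hae2 : ∀ᵐ x ∂volume.restrict (Set.uIoc 0 (1-δ)), ‖h2 x‖ ≤ (1-x) ^ (a-2) := by
      filter_upwards [ae_restrict_mem measurableSet_uIoc] with x hx
      rw [uIoc_of_le h01] at hx
      have hx0 : 0 < x := hx.1
      have hx1 : x ≤ 1 - δ := hx.2
      have h1x : 0 < 1 - x := by linarith [hδ0]
      rw [hh2_def]
      have hcast : (1:ℂ) - (x:ℂ) = ((1 - x : ℝ) : ℂ) := by push_cast; ring
      simp only [norm_mul]
      rw [Complex.norm_cpow_eq_rpow_re_of_pos hx0, hcast,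
        Complex.norm_cpow_eq_rpow_re_of_pos h1x]
      have h1 : x ^ (s+1).re ≤ 1 :=
        Real.rpow_le_one hx0.le (by linarith) (by rw [hs1re]; linarith)
      have h2' : (1-x) ^ (z-1-1).re ≤ (1-x) ^ (a-2) := by
        simp only [Complex.sub_re, Complex.one_re]
        exact Real.rpow_le_rpow_of_exponent_ge h1x (by linarith) (by linarith)
      calc x ^ (s+1).re * (1-x) ^ (z-1-1).re
          ≤ 1 * ((1-x) ^ (a-2)) :=
            mul_le_mul h1 h2' (Real.rpow_nonneg h1x.le _) zero_le_one
        _ = (1-x) ^ (a-2) := one_mul _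
    refine le_trans (intervalIntegral.norm_integral_le_abs_of_norm_le hae2 hbint) ?_
    rcases eq_or_lt_of_le hδ1 with h | h
    · have h10 : (1:ℝ) - δ = 0 := by rw [h]; ring
      rw [h10, intervalIntegral.integral_same]
      simp only [abs_zero]
      exact div_nonneg (Real.rpow_nonneg hδ0.le _) (by linarith)
    · have hcomp2 : ∫ x in (0:ℝ)..(1-δ), (1-x) ^ (a-2) = ∫ x in δ..1, x ^ (a-2) := by
        have := intervalIntegral.integral_comp_sub_left (a := (0:ℝ)) (b := 1-δ)
          (fun x : ℝ => x ^ (a-2)) 1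
        simpa using this
      rw [hcomp2, integral_rpow (Or.inr ⟨by intro hh; linarith,
        by rw [uIcc_of_le hδ1]; intro h0; exact absurd h0.1 (by linarith)⟩)]
      have he : a - 2 + 1 = a - 1 := by ring
      rw [he, Real.one_rpow]
      have hδge : (1:ℝ) ≤ δ ^ (a-1) := by
        have := Real.rpow_le_rpow_of_exponent_ge hδ0 hδ1 (by linarith : a - 1 ≤ (0:ℝ))
        simpa [Real.rpow_zero] using this
      rw [_root_.abs_div, _root_.abs_of_nonpos (by linarith : (1:ℝ) - δ ^ (a-1) ≤ 0),
        _root_.abs_of_nonpos (by linarith : a - 1 ≤ (0:ℝ)), neg_sub, neg_sub]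
      rw [div_le_div_iff₀ (by linarith) (by linarith)]
      nlinarith [Real.rpow_nonneg hδ0.le (a-1)]
  -- combine
  have hmain : ‖∫ x in (0:ℝ)..(1-δ), g x‖ ≤ (1 + ‖z-1‖/(1-a)) * δ ^ a := by
    rw [hmainid, norm_div]
    have hnum : ‖F (1-δ) + (z-1) * ∫ x in (0:ℝ)..(1-δ), h2 x‖
        ≤ δ ^ (a-1) + ‖z-1‖ * (δ ^ (a-1) / (1-a)) := by
      refine (norm_add_le _ _).trans (add_le_add hbF ?_)
      rw [norm_mul]
      exact mul_le_mul_of_nonneg_left hbh2 (norm_nonneg _)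
    have hden : δ⁻¹ ≤ ‖s+1‖ := by
      rw [hδ_def, inv_inv]
      exact habs_s1
    have hδa : δ ^ (a-1) * δ = δ ^ a := by
      have h' := (Real.rpow_add hδ0 (a-1) 1).symm
      rw [Real.rpow_one] at h'
      rw [h']
      norm_num
    have h1a : (0:ℝ) < 1 - a := by linarith
    have hpos1 : (0:ℝ) ≤ δ ^ (a-1) + ‖z-1‖ * (δ ^ (a-1) / (1-a)) :=
      add_nonneg (Real.rpow_nonneg hδ0.le _) (mul_nonneg (norm_nonneg _)
        (div_nonneg (Real.rpow_nonneg hδ0.le _) h1a.le))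
    calc ‖F (1-δ) + (z-1) * ∫ x in (0:ℝ)..(1-δ), h2 x‖ / ‖s+1‖
        ≤ (δ ^ (a-1) + ‖z-1‖ * (δ ^ (a-1) / (1-a))) / δ⁻¹ :=
          div_le_div₀ hpos1 hnum (inv_pos.mpr hδ0) hden
      _ = (1 + ‖z-1‖/(1-a)) * δ ^ a := by
          rw [div_eq_mul_inv _ δ⁻¹, inv_inv, ← hδa]
          ring
  have hB : ‖Complex.betaIntegral (s+1) z‖ ≤ K * δ ^ a := by
    rw [hBrepr, hsplit]
    refine (norm_add_le _ _).trans ?_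
    have := add_le_add hmain htail
    refine this.trans (le_of_eq ?_)
    rw [hK_def]
    ring
  -- final computation
  have hrpow : |t| ^ (-1 - a) = δ ^ a * |t|⁻¹ := by
    rw [show (-1 - a : ℝ) = -a + (-1) by ring, Real.rpow_add ht0, Real.rpow_neg_one,
      Real.rpow_neg ht0.le, hδ_def, Real.inv_rpow (abs_nonneg t)]
  rw [key, norm_div, norm_mul]
  have hΓznorm : 0 < ‖Complex.Gamma z‖ := norm_pos_iff.mpr hΓz
  have habs : |t| ≤ ‖s‖ := by exact habs_s
  have hKnn : (0:ℝ) ≤ K := by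
    rw [hK_def]
    have h1a : (0:ℝ) < 1 - a := by linarith
    have : (0:ℝ) ≤ ‖z - 1‖ / (1 - a) := div_nonneg (norm_nonneg _) h1a.le
    have : (0:ℝ) ≤ 1/a := by positivity
    linarith
  calc ‖Complex.betaIntegral (s+1) z‖ / (‖s‖ * ‖Complex.Gamma z‖)
      ≤ (K * δ ^ a) / (|t| * ‖Complex.Gamma z‖) := by
        apply div_le_div₀ (mul_nonneg hKnn (Real.rpow_nonneg hδ0.le _)) hB
          (mul_pos ht0 hΓznorm)
        exact mul_le_mul_of_nonneg_right habs hΓznorm.le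
    _ = K / ‖Complex.Gamma z‖ * |t| ^ (-1 - a) := by
        rw [hrpow, div_eq_mul_inv _ (|t| * ‖Complex.Gamma z‖), mul_inv,
          div_eq_mul_inv K]
        ring

/-- The function whose Mellin transform is `Γ(s)/Γ(s+z+1)`. -/
noncomputable def fz (z : ℂ) : ℝ → ℂ :=
  Set.indicator (Set.Ioo (0:ℝ) 1) (fun t => (1 - (t:ℂ)) ^ z / Complex.Gamma (z + 1))

lemma fz_smul (z : ℂ) (s : ℂ) :
    (fun t : ℝ => (t:ℂ) ^ (s - 1) • fz z t)
      = Set.indicator (Set.Ioo (0:ℝ) 1)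
        (fun t : ℝ => ((t:ℂ) ^ (s - 1) * (1 - (t:ℂ)) ^ ((z+1) - 1)) / Complex.Gamma (z + 1)) := by
  ext t
  by_cases h : t ∈ Set.Ioo (0:ℝ) 1
  · rw [fz, Set.indicator_of_mem h, Set.indicator_of_mem h, smul_eq_mul,
      add_sub_cancel_right]
    ring
  · rw [fz, Set.indicator_of_notMem h, Set.indicator_of_notMem h, smul_zero]

lemma mellin_fz {z : ℂ} (hz : 0 < z.re) {s : ℂ} (hs : 0 < s.re) :
    mellin (fz z) s = Complex.Gamma s / Complex.Gamma (s + z + 1) := by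
  have hz1 : 0 < (z+1).re := by simp [Complex.add_re]; linarith
  have hΓz1 : Complex.Gamma (z+1) ≠ 0 := Complex.Gamma_ne_zero_of_re_pos hz1
  have hΓd : Complex.Gamma (s + z + 1) ≠ 0 := by
    apply Complex.Gamma_ne_zero_of_re_pos
    simp [Complex.add_re]
    linarith
  rw [mellin, fz_smul z s, setIntegral_indicator measurableSet_Ioo,
    Set.inter_eq_self_of_subset_right Set.Ioo_subset_Ioi_self,
    ← integral_Ioc_eq_integral_Ioo, ← intervalIntegral.integral_of_le zero_le_one]
  have hb : ∫ t in (0:ℝ)..1, ((t:ℂ) ^ (s-1) * (1 - (t:ℂ)) ^ ((z+1) - 1)) / Complex.Gamma (z+1)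
      = Complex.betaIntegral s (z+1) / Complex.Gamma (z+1) := by
    rw [Complex.betaIntegral, intervalIntegral.integral_div]
  rw [hb]
  have hid := Complex.Gamma_mul_Gamma_eq_betaIntegral hs hz1
  have h1 : s + (z+1) = s + z + 1 := by ring
  rw [h1] at hid
  field_simp
  linear_combination -hid

lemma mconv_fz {z : ℂ} (hz : 0 < z.re) {c : ℝ} (hc : 0 < c) :
    MellinConvergent (fz z) (c : ℂ) := by
  rw [MellinConvergent, fz_smul z (c : ℂ)]
  have hz1 : 0 < (z+1).re := by simp [Complex.add_re]; linarith
  have hcv := (Complex.betaIntegral_convergent (u := (c:ℂ)) (v := z+1) (by simpa using hc) hz1).1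
  have hcv2 : IntegrableOn
      (fun t : ℝ => ((t:ℂ) ^ ((c:ℂ) - 1) * (1 - (t:ℂ)) ^ ((z+1) - 1)) / Complex.Gamma (z+1))
      (Set.Ioo 0 1) :=
    MeasureTheory.Integrable.div_const (hcv.mono_set Set.Ioo_subset_Ioc_self) _
  exact ((integrable_indicator_iff measurableSet_Ioo).2 hcv2).integrableOn

lemma integrableOn_neg_aux {f : ℝ → ℂ} (h : IntegrableOn f (Set.Ioi (1:ℝ))) :
    IntegrableOn (fun t => f (-t)) (Set.Iio (-1:ℝ)) := by
  have h1 : Integrable ((Set.Ioi (1:ℝ)).indicator f) :=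
    (integrable_indicator_iff measurableSet_Ioi).2 h
  have h2 := h1.comp_neg
  have h3 : (fun t : ℝ => (Set.Ioi (1:ℝ)).indicator f (-t))
      = (Set.Iio (-1:ℝ)).indicator (fun t => f (-t)) := by
    ext t
    have hiff : (1:ℝ) < -t ↔ t < -1 := by constructor <;> intro <;> linarith
    simp [Set.indicator_apply, Set.mem_Ioi, Set.mem_Iio, hiff]
  rw [h3] at h2
  exact (integrable_indicator_iff measurableSet_Iio).1 h2

lemma cont_G (c : ℝ) (hc : 0 < c) (z : ℂ) (hz : 0 < z.re) :
    Continuous (fun t : ℝ => Complex.Gamma (c + t * I) / Complex.Gamma ((c + t * I) + z + 1)) := by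
  refine continuous_iff_continuousAt.2 fun t => ?_
  have hmap : Continuous fun t : ℝ => (c : ℂ) + t * I := by continuity
  have hmap2 : Continuous fun t : ℝ => ((c : ℂ) + t * I) + z + 1 := by continuity
  have h1 : ContinuousAt Complex.Gamma ((c:ℂ) + t * I) := by
    refine (Complex.differentiableAt_Gamma _ fun m => ?_).continuousAt
    intro h
    have := congrArg Complex.re h
    simp [Complex.add_re] at this
    have hm : (0:ℝ) ≤ m := Nat.cast_nonneg m
    linarith
  have h2 : ContinuousAt Complex.Gamma (((c:ℂ) + t * I) + z + 1) := by
    refine (Complex.differentiableAt_Gamma _ fun m => ?_).continuousAt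
    intro h
    have := congrArg Complex.re h
    simp [Complex.add_re] at this
    have hm : (0:ℝ) ≤ m := Nat.cast_nonneg m
    linarith
  have hne : Complex.Gamma (((c:ℂ) + t * I) + z + 1) ≠ 0 := by
    apply Complex.Gamma_ne_zero_of_re_pos
    simp [Complex.add_re]
    linarith
  have hnum := ContinuousAt.comp (f := fun t : ℝ => (c:ℂ) + t * I) (x := t) h1
    hmap.continuousAt
  have hden := ContinuousAt.comp (f := fun t : ℝ => ((c:ℂ) + t * I) + z + 1) (x := t) h2
    hmap2.continuousAt
  exact ContinuousAt.div hnum hden hne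

lemma integrable_G (c : ℝ) (hc : 0 < c) (z : ℂ) (hz : 0 < z.re) :
    Integrable (fun t : ℝ =>
      Complex.Gamma (c + t * I) / Complex.Gamma ((c + t * I) + z + 1)) := by
  set G : ℝ → ℂ := fun t => Complex.Gamma (c + t * I) / Complex.Gamma ((c + t * I) + z + 1)
    with hG_def
  have hG : Continuous G := cont_G c hc z hz
  obtain ⟨C, hC⟩ := beta_decay c hc z hz
  set a : ℝ := min z.re 2⁻¹ with ha_def
  have ha : 0 < a := lt_min hz (by norm_num)
  have hrint : Integrable (fun t : ℝ => C * t ^ (-1 - a)) (volume.restrict (Set.Ioi 1)) :=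
    (integrableOn_Ioi_rpow_of_lt (by linarith) one_pos).const_mul C
  have h2 : IntegrableOn G (Set.Ioi 1) := by
    apply Integrable.mono hrint hG.aestronglyMeasurable.restrict
    filter_upwards [ae_restrict_mem measurableSet_Ioi] with t htt
    have htpos : (0:ℝ) < t := lt_trans one_pos htt
    have h1t : (1:ℝ) ≤ |t| := by rw [_root_.abs_of_pos htpos]; exact le_of_lt htt
    calc ‖G t‖ ≤ C * |t| ^ (-1 - a) := hC t h1t
      _ = C * t ^ (-1 - a) := by rw [_root_.abs_of_pos htpos]
      _ ≤ ‖C * t ^ (-1 - a)‖ := le_abs_self _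
  have h3 : IntegrableOn G (Set.Iio (-1)) := by
    have h4 : IntegrableOn (fun t => G (-t)) (Set.Ioi 1) := by
      apply Integrable.mono hrint (hG.comp continuous_neg).aestronglyMeasurable.restrict
      filter_upwards [ae_restrict_mem measurableSet_Ioi] with t htt
      have htpos : (0:ℝ) < t := lt_trans one_pos htt
      have h1t : (1:ℝ) ≤ |(-t)| := by rw [abs_neg, _root_.abs_of_pos htpos]; exact le_of_lt htt
      calc ‖G (-t)‖ ≤ C * |(-t)| ^ (-1 - a) := hC (-t) h1t
        _ = C * t ^ (-1 - a) := by rw [abs_neg, _root_.abs_of_pos htpos]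
        _ ≤ ‖C * t ^ (-1 - a)‖ := le_abs_self _
    have h5 := integrableOn_neg_aux h4
    simpa using h5
  have h1' : IntegrableOn G (Set.Icc (-1) 1) := hG.integrableOn_Icc
  rw [← integrableOn_univ]
  apply ((h3.union h1').union h2).mono_set
  intro x _
  simp only [Set.mem_union, Set.mem_Iio, Set.mem_Icc, Set.mem_Ioi]
  rcases lt_or_ge x (-1) with h | h
  · exact Or.inl (Or.inl h)
  rcases le_or_gt x 1 with h' | h'
  · exact Or.inl (Or.inr ⟨h, h'⟩)
  · exact Or.inr h'

lemma vint_fz {z : ℂ} (hz : 0 < z.re) {c : ℝ} (hc : 0 < c) :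
    Complex.VerticalIntegrable (mellin (fz z)) c := by
  rw [Complex.VerticalIntegrable]
  have heq : (fun y : ℝ => mellin (fz z) ((c:ℝ) + y * I))
      = fun t : ℝ => Complex.Gamma (c + t * I) / Complex.Gamma ((c + t * I) + z + 1) := by
    funext t
    exact mellin_fz hz (by simp [Complex.add_re]; linarith)
  rw [heq]
  exact integrable_G c hc z hz

lemma contAt_fz {z : ℂ} (hz : 0 < z.re) {x : ℝ} (hx : 1 ≤ x) : ContinuousAt (fz z) x := by
  rcases eq_or_lt_of_le hx with h | h
  · -- x = 1
    have hfx : fz z 1 = 0 := Set.indicator_of_notMem (by simp) _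
    rw [ContinuousAt, ← h, hfx]
    apply squeeze_zero_norm (a := fun t : ℝ => |1 - t| ^ z.re / ‖Complex.Gamma (z+1)‖)
    · intro t
      by_cases htt : t ∈ Set.Ioo (0:ℝ) 1
      · rw [fz, Set.indicator_of_mem htt, norm_div]
        have h1t : 0 < 1 - t := by linarith [htt.2]
        have hcast : (1:ℂ) - (t:ℂ) = ((1 - t : ℝ) : ℂ) := by push_cast; ring
        rw [hcast, Complex.norm_cpow_eq_rpow_re_of_pos h1t,
          _root_.abs_of_pos h1t]
      · rw [fz, Set.indicator_of_notMem htt, norm_zero]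
        apply div_nonneg (Real.rpow_nonneg (abs_nonneg _) _) (norm_nonneg _)
    · have h0 : Filter.Tendsto (fun t : ℝ => |1 - t|) (nhds 1) (nhds 0) := by
        have hcont : Continuous fun t : ℝ => |1 - t| := (continuous_const.sub continuous_id).abs
        have := hcont.tendsto 1
        simpa using this
      have h1 : Filter.Tendsto (fun u : ℝ => u ^ z.re) (nhds 0) (nhds 0) := by
        have := Real.continuousAt_rpow_const 0 z.re (Or.inr hz.le)
        rw [ContinuousAt] at this
        simpa [Real.zero_rpow hz.ne'] using this
      have := (h1.comp h0).div_const ‖Complex.Gamma (z+1)‖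
      simpa using this
  · -- x > 1
    apply Filter.EventuallyEq.continuousAt (y := 0)
    filter_upwards [Ioi_mem_nhds h] with t htt
    refine Set.indicator_of_notMem (fun hm => ?_) _
    exact absurd hm.2 (not_lt.2 (le_of_lt htt))

end Stmt2Aux

open Stmt2Aux in
theorem stmt_2 (c x : ℝ) (hc : 0 < c) (hx : 1 ≤ x) (z : ℂ) (hz : 0 < z.re) :
    (1 / (2 * Real.pi)) *
        ∫ t : ℝ, Complex.Gamma (c + t * I) * (x : ℂ) ^ (-(c + t * I)) /
          Complex.Gamma ((c + t * I) + z + 1) = 0 := by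
  have h0x : (0:ℝ) < x := lt_of_lt_of_le one_pos hx
  have hinv := mellinInv_mellin_eq c (fz z) h0x (mconv_fz hz hc) (vint_fz hz hc) (contAt_fz hz hx)
  have hfx : fz z x = 0 :=
    Set.indicator_of_notMem (fun hm => absurd hm.2 (not_lt.2 hx)) _
  rw [hfx, mellinInv] at hinv
  have hcongr : (∫ y : ℝ, (x:ℂ) ^ (-((c:ℝ) + y * I)) • mellin (fz z) ((c:ℝ) + y * I))
      = ∫ t : ℝ, Complex.Gamma (c + t * I) * (x : ℂ) ^ (-(c + t * I)) /
          Complex.Gamma ((c + t * I) + z + 1) := by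
    congr 1
    funext t
    rw [mellin_fz hz (by simp [Complex.add_re]; linarith : 0 < ((c:ℂ) + t * I).re),
      smul_eq_mul]
    ring
  rw [hcongr, Complex.real_smul] at hinv
  push_cast at hinv
  convert hinv using 2
end

section
/- For every complex w and integer N ≥ 4, one has |∑_{n=1}^∞ (Λ(n)/n) ((1 - 1/(nN))^w - 1)| ≪ 2^{|Re w|} log(|w| + 2), with an absolute implied constant. -/
open ArithmeticFunction Finset


lemma ident (T : ℕ) :
    ∑ k ∈ Icc 1 T, Λ k * ((T / k : ℕ) : ℝ) = ∑ k ∈ Icc 1 T, Real.log k := by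
  have h1 : ∀ k ∈ Icc 1 T, Real.log k = ∑ d ∈ (Icc 1 T).filter (· ∣ k), Λ d := by
    intro k hk
    rw [mem_Icc] at hk
    rw [← vonMangoldt_sum]
    congr 1
    ext d
    simp only [Nat.mem_divisors, mem_filter, mem_Icc]
    constructor
    · rintro ⟨hd, hk0⟩
      have hd0 : d ≠ 0 := fun h => hk0 (by simpa [h] using hd)
      exact ⟨⟨Nat.one_le_iff_ne_zero.2 hd0, (Nat.le_of_dvd (by omega) hd).trans hk.2⟩, hd⟩
    · rintro ⟨⟨ha, hb⟩, hd⟩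
      exact ⟨hd, by omega⟩
  rw [Finset.sum_congr rfl h1]
  simp_rw [Finset.sum_filter]
  rw [Finset.sum_comm]
  refine Finset.sum_congr rfl fun d hd => ?_
  rw [← Finset.sum_filter, Finset.sum_const, nsmul_eq_mul, mul_comm]
  congr 2
  have : Icc 1 T = Ioc 0 T := by rw [← Finset.Icc_add_one_left_eq_Ioc]; rfl
  rw [this, Nat.Ioc_filter_dvd_card_eq_div]



lemma mertens (T : ℕ) (hT : 1 ≤ T) :
    ∑ k ∈ Icc 1 T, Λ k / k ≤ 2 * Real.log T := by
  have hT0 : (0:ℝ) < T := by exact_mod_cast hT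
  rw [← mul_le_mul_iff_right₀ hT0]
  have step1 : (T:ℝ) * ∑ k ∈ Icc 1 T, Λ k / k
      ≤ ∑ k ∈ Icc 1 T, Λ k * (((T / k : ℕ) : ℝ) + 1) := by
    rw [Finset.mul_sum]
    refine Finset.sum_le_sum fun k hk => ?_
    rw [mem_Icc] at hk
    have hk0 : (0:ℝ) < k := by exact_mod_cast hk.1
    have hdiv : (T:ℝ) / k ≤ ((T / k : ℕ) : ℝ) + 1 := by
      have h1 := Nat.div_add_mod T k
      have h2 := Nat.mod_lt T (show 0 < k by omega)
      have h1' : (T:ℝ) = k * ((T / k : ℕ):ℝ) + ((T % k : ℕ):ℝ) := by exact_mod_cast h1.symm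
      have h2' : ((T % k : ℕ):ℝ) < k := by exact_mod_cast h2
      rw [div_le_iff₀ hk0]
      nlinarith
    calc (T:ℝ) * (Λ k / k) = Λ k * ((T:ℝ)/k) := by ring
    _ ≤ Λ k * (((T / k : ℕ) : ℝ) + 1) :=
        mul_le_mul_of_nonneg_left hdiv vonMangoldt_nonneg
  have step2 : ∑ k ∈ Icc 1 T, Λ k * (((T / k : ℕ) : ℝ) + 1)
      ≤ 2 * ∑ k ∈ Icc 1 T, Λ k * ((T / k : ℕ) : ℝ) := by
    rw [Finset.mul_sum]
    refine Finset.sum_le_sum fun k hk => ?_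
    rw [mem_Icc] at hk
    have h1 : (1:ℝ) ≤ ((T / k : ℕ) : ℝ) := by
      have := Nat.one_le_div_iff (show 0 < k by omega) |>.2 hk.2
      exact_mod_cast this
    nlinarith [vonMangoldt_nonneg (n := k)]
  have step3 : ∑ k ∈ Icc 1 T, Real.log k ≤ (T:ℝ) * Real.log T := by
    calc ∑ k ∈ Icc 1 T, Real.log k ≤ ∑ k ∈ Icc 1 T, Real.log T := by
          refine Finset.sum_le_sum fun k hk => ?_
          rw [mem_Icc] at hk
          exact Real.log_le_log (by exact_mod_cast hk.1) (by exact_mod_cast hk.2)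
    _ = (T:ℝ) * Real.log T := by
          rw [Finset.sum_const, Nat.card_Icc]
          simp [nsmul_eq_mul]
  calc (T:ℝ) * ∑ k ∈ Icc 1 T, Λ k / k
      ≤ 2 * ∑ k ∈ Icc 1 T, Λ k * ((T / k : ℕ) : ℝ) := step1.trans step2
    _ = 2 * ∑ k ∈ Icc 1 T, Real.log k := by rw [ident]
    _ ≤ 2 * ((T:ℝ) * Real.log T) := by linarith [step3]
    _ = (T:ℝ) * (2 * Real.log T) := by ring


lemma telescope (n : ℕ) (hn : 1 ≤ n) :
    Real.log n / (n:ℝ)^2 ≤ (Real.log n + 2) / n - (Real.log (n+1) + 2) / (n+1) := by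
  have hn0 : (0:ℝ) < n := by exact_mod_cast hn
  have hn1 : (0:ℝ) < (n:ℝ) + 1 := by linarith
  have hlogn : (0:ℝ) ≤ Real.log n := Real.log_nonneg (by exact_mod_cast hn)
  have hlogle : Real.log n ≤ (n:ℝ) := (Real.log_le_sub_one_of_pos hn0).trans (by linarith)
  have hstep : Real.log ((n:ℝ)+1) - Real.log n ≤ 1 / n := by
    have h1 : Real.log ((n:ℝ)+1) - Real.log n = Real.log (((n:ℝ)+1)/n) := by
      rw [Real.log_div (by positivity) (by positivity)]
    rw [h1]
    have := Real.log_le_sub_one_of_pos (show (0:ℝ) < ((n:ℝ)+1)/n by positivity)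
    have h2 : ((n:ℝ)+1)/n - 1 = 1/n := by field_simp; ring
    linarith
  have key : (Real.log n + 2) / n - (Real.log ((n:ℝ)+1) + 2) / ((n:ℝ)+1)
      ≥ (Real.log n + 1) / (n * ((n:ℝ)+1)) := by
    have expand : (Real.log n + 2) / n - (Real.log n + 2) / ((n:ℝ)+1)
        = (Real.log n + 2) / (n * ((n:ℝ)+1)) := by
      field_simp
      ring
    have : (Real.log ((n:ℝ)+1) + 2) / ((n:ℝ)+1) - (Real.log n + 2) / ((n:ℝ)+1)
        ≤ (1/n) / ((n:ℝ)+1) := by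
      rw [div_sub_div_same]
      gcongr
      linarith
    have h3 : (1/n)/((n:ℝ)+1) = 1 / (n * ((n:ℝ)+1)) := by field_simp
    rw [h3] at this
    have h4 : (Real.log n + 2) / (n * ((n:ℝ)+1)) - 1 / (n * ((n:ℝ)+1))
        = (Real.log n + 1) / (n * ((n:ℝ)+1)) := by
      rw [div_sub_div_same]; ring_nf
    linarith
  have final : Real.log n / (n:ℝ)^2 ≤ (Real.log n + 1) / (n * ((n:ℝ)+1)) := by
    rw [div_le_div_iff₀ (by positivity) (by positivity)]
    nlinarith
  push_cast
  linarith


-- head bound: for 1/2 ≤ x ≤ 1, 0 < x: ‖(x:ℂ)^w - 1‖ ≤ 2 * 2^|w.re|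
lemma head_bd {x : ℝ} (hx0 : 0 < x) (hx1 : (1:ℝ)/2 ≤ x) (hx2 : x ≤ 1) (w : ℂ) :
    ‖((x:ℂ)) ^ w - 1‖ ≤ 2 * (2:ℝ) ^ |w.re| := by
  have hP1 : (1:ℝ) ≤ (2:ℝ) ^ |w.re| := by
    rw [show (1:ℝ) = (2:ℝ)^(0:ℝ) by simp]
    exact Real.rpow_le_rpow_of_exponent_le one_le_two (abs_nonneg _)
  have hnorm : ‖((x:ℂ)) ^ w‖ = x ^ w.re := by
    rw [Complex.norm_cpow_eq_rpow_re_of_pos hx0]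
  have hbd : x ^ w.re ≤ (2:ℝ) ^ |w.re| := by
    rcases le_or_gt 0 w.re with h | h
    · calc x ^ w.re ≤ 1 ^ w.re := Real.rpow_le_rpow hx0.le hx2 h
        _ = 1 := Real.one_rpow _
        _ ≤ _ := hP1
    · have : x ^ w.re ≤ ((1:ℝ)/2) ^ w.re :=
        Real.rpow_le_rpow_of_nonpos (by norm_num) hx1 h.le
      calc x ^ w.re ≤ ((1:ℝ)/2) ^ w.re := this
        _ = (2:ℝ) ^ (-w.re) := by
            rw [one_div, Real.inv_rpow (by norm_num), ← Real.rpow_neg (by norm_num)]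
        _ = (2:ℝ) ^ |w.re| := by rw [abs_of_neg h]
  calc ‖((x:ℂ)) ^ w - 1‖ ≤ ‖((x:ℂ)) ^ w‖ + ‖(1:ℂ)‖ := norm_sub_le _ _
    _ = x ^ w.re + 1 := by rw [hnorm, norm_one]
    _ ≤ (2:ℝ) ^ |w.re| + (2:ℝ) ^ |w.re| := by linarith
    _ = 2 * (2:ℝ) ^ |w.re| := by ring

-- tail bound: for 0 < δ ≤ 1/2, ‖w‖ * δ ≤ 1/4 : ‖((1-δ:ℝ):ℂ)^w - 1‖ ≤ 4 * ‖w‖ * δ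
lemma tail_bd {δ : ℝ} (hδ0 : 0 < δ) (hδ1 : δ ≤ 1/2) (w : ℂ) (hwδ : ‖w‖ * δ ≤ 1/4) :
    ‖(((1 - δ : ℝ)):ℂ) ^ w - 1‖ ≤ 4 * ‖w‖ * δ := by
  set x : ℝ := 1 - δ with hxdef
  have hx0 : 0 < x := by rw [hxdef]; linarith
  have hlog : -Real.log x ≤ 2 * δ := by
    have h1 : Real.log x⁻¹ ≤ x⁻¹ - 1 := Real.log_le_sub_one_of_pos (by positivity)
    rw [Real.log_inv] at h1
    have h2 : x⁻¹ - 1 = δ / x := by rw [eq_div_iff hx0.ne', sub_mul, inv_mul_cancel₀ hx0.ne', hxdef]; ring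
    have h3 : δ / x ≤ 2 * δ := by
      rw [div_le_iff₀ hx0]
      nlinarith
    linarith
  have hlogle : |Real.log x| ≤ 2 * δ := by
    rw [abs_of_nonpos (Real.log_nonpos hx0.le (by rw [hxdef]; linarith))]
    exact hlog
  have hcpow : ((x:ℂ)) ^ w = Complex.exp (w * (Real.log x : ℂ)) := by
    rw [Complex.cpow_def_of_ne_zero (by exact_mod_cast hx0.ne'), Complex.ofReal_log hx0.le,
      mul_comm]
  have hz : ‖w * (Real.log x : ℂ)‖ ≤ 2 * ‖w‖ * δ := by
    rw [norm_mul, Complex.norm_real, Real.norm_eq_abs]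
    calc ‖w‖ * |Real.log x| ≤ ‖w‖ * (2 * δ) :=
        mul_le_mul_of_nonneg_left hlogle (norm_nonneg w)
      _ = 2 * ‖w‖ * δ := by ring
  have hz1 : ‖w * (Real.log x : ℂ)‖ ≤ 1 := by
    calc ‖w * (Real.log x : ℂ)‖ ≤ 2 * ‖w‖ * δ := hz
      _ ≤ 1 := by nlinarith
  rw [hcpow]
  calc ‖Complex.exp (w * (Real.log x : ℂ)) - 1‖ ≤ 2 * ‖w * (Real.log x : ℂ)‖ := by
        have := Complex.norm_exp_sub_one_le (x := w * (Real.log x : ℂ)) (by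
          exact hz1)
        exact this
    _ ≤ 2 * (2 * ‖w‖ * δ) := by linarith
    _ = 4 * ‖w‖ * δ := by ring


set_option maxHeartbeats 1000000 in
theorem stmt_5 :
    ∃ C > 0, ∀ (w : ℂ) (N : ℕ), 4 ≤ N →
      ‖∑' n : ℕ, ((Λ n : ℂ) / n) * ((((1 : ℝ) - 1 / (n * N) : ℝ) : ℂ) ^ w - 1)‖ ≤
        C * (2 : ℝ) ^ |w.re| * Real.log (‖w‖ + 2) := by
  refine ⟨20, by norm_num, ?_⟩
  intro w N hN
  set P : ℝ := (2:ℝ) ^ |w.re| with hPdef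
  set L : ℝ := Real.log (‖w‖ + 2) with hLdef
  set T : ℕ := ⌈‖w‖⌉₊ + 2 with hTdef
  set f : ℕ → ℂ := fun n => ((Λ n : ℂ) / n) * ((((1 : ℝ) - 1 / (n * N) : ℝ) : ℂ) ^ w - 1)
    with hfdef
  have hw0 : (0:ℝ) ≤ ‖w‖ := norm_nonneg w
  have hN4 : (4:ℝ) ≤ (N:ℝ) := by exact_mod_cast hN
  have hT_lb : ‖w‖ + 2 ≤ (T:ℝ) := by
    have := Nat.le_ceil ‖w‖
    push_cast [hTdef]
    linarith
  have hT_ub : (T:ℝ) ≤ ‖w‖ + 3 := by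
    have := (Nat.ceil_lt_add_one hw0).le
    push_cast [hTdef]
    linarith
  have hP1 : (1:ℝ) ≤ P := by
    rw [hPdef, show (1:ℝ) = (2:ℝ)^(0:ℝ) by simp]
    exact Real.rpow_le_rpow_of_exponent_le one_le_two (abs_nonneg _)
  have hL : (1/2:ℝ) ≤ L := by
    have h2 : Real.log 2 ≤ L := Real.log_le_log (by norm_num) (by linarith)
    have := Real.log_two_gt_d9
    linarith
  -- head pointwise bound
  have hhead : ∀ n : ℕ, ‖f n‖ ≤ 2 * P * (Λ n / n) := by
    intro n
    rcases Nat.eq_zero_or_pos n with rfl | hn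
    · simp [hfdef]
    · have hn0 : (0:ℝ) < n := by exact_mod_cast hn
      have hn1 : (1:ℝ) ≤ n := by exact_mod_cast hn
      have hnN : (4:ℝ) ≤ (n:ℝ) * N := by nlinarith
      have hδ0 : (0:ℝ) < 1 / ((n:ℝ) * N) := by positivity
      have hδ1 : 1 / ((n:ℝ) * N) ≤ 1/4 := by
        rw [div_le_div_iff₀ (by linarith) (by norm_num)]
        linarith
      have hx0 : (0:ℝ) < 1 - 1 / ((n:ℝ) * N) := by linarith
      have hb := head_bd hx0 (by linarith) (by linarith) w
      have hcoef : ‖(Λ n : ℂ) / (n:ℂ)‖ = Λ n / n := by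
        rw [norm_div, Complex.norm_real, Real.norm_eq_abs, abs_of_nonneg vonMangoldt_nonneg]
        norm_num
      calc ‖f n‖ = (Λ n / n) * ‖(((1 : ℝ) - 1 / (n * N) : ℝ) : ℂ) ^ w - 1‖ := by
            rw [hfdef]; simp only [norm_mul]; rw [hcoef]
        _ ≤ (Λ n / n) * (2 * P) := by
            refine mul_le_mul_of_nonneg_left hb (div_nonneg vonMangoldt_nonneg hn0.le)
        _ = 2 * P * (Λ n / n) := by ring
  -- tail pointwise bound
  have htail : ∀ n : ℕ, T + 1 ≤ n → ‖f n‖ ≤ ‖w‖ * Real.log n / (n:ℝ)^2 := by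
    intro n hn
    have hn3 : ‖w‖ + 3 ≤ (n:ℝ) := by
      have : ((T:ℕ):ℝ) + 1 ≤ (n:ℝ) := by exact_mod_cast hn
      linarith
    have hn0 : (0:ℝ) < n := by linarith
    have hnN0 : (0:ℝ) < (n:ℝ) * N := by positivity
    have hδ0 : (0:ℝ) < 1 / ((n:ℝ) * N) := by positivity
    have hδ1 : 1 / ((n:ℝ) * N) ≤ 1/2 := by
      rw [div_le_div_iff₀ hnN0 (by norm_num)]
      nlinarith
    have hwδ : ‖w‖ * (1 / ((n:ℝ) * N)) ≤ 1/4 := by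
      rw [mul_one_div, div_le_div_iff₀ hnN0 (by norm_num)]
      nlinarith
    have hb := tail_bd hδ0 hδ1 w hwδ
    have hcoef : ‖(Λ n : ℂ) / (n:ℂ)‖ = Λ n / n := by
      rw [norm_div, Complex.norm_real, Real.norm_eq_abs, abs_of_nonneg vonMangoldt_nonneg]
      norm_num
    have hb2 : 4 * ‖w‖ * (1 / ((n:ℝ) * N)) ≤ ‖w‖ / n := by
      rw [mul_one_div, div_le_div_iff₀ hnN0 hn0]
      nlinarith [mul_nonneg (mul_nonneg hw0 hn0.le) (show (0:ℝ) ≤ (N:ℝ) - 4 by linarith)]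
    calc ‖f n‖ = (Λ n / n) * ‖(((1 : ℝ) - 1 / (n * N) : ℝ) : ℂ) ^ w - 1‖ := by
          rw [hfdef]; simp only [norm_mul]; rw [hcoef]
      _ ≤ (Λ n / n) * (‖w‖ / n) := by
          refine mul_le_mul_of_nonneg_left (hb.trans hb2) (div_nonneg vonMangoldt_nonneg hn0.le)
      _ ≤ (Real.log n / n) * (‖w‖ / n) := by
          refine mul_le_mul_of_nonneg_right ?_ (by positivity)
          exact div_le_div_of_nonneg_right vonMangoldt_le_log hn0.le
      _ = ‖w‖ * Real.log n / (n:ℝ)^2 := by field_simp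
  -- telescoping partial sum bound for the tail
  set a : ℕ → ℝ := fun m => (Real.log m + 2) / m with hadef
  have ha_nonneg : ∀ m : ℕ, 0 ≤ a m := by
    intro m
    rcases Nat.eq_zero_or_pos m with rfl | hm
    · simp [hadef]
    · have h1 : (1:ℝ) ≤ m := by exact_mod_cast hm
      have := Real.log_nonneg h1
      positivity
  have hg_partial : ∀ M : ℕ, ∑ k ∈ range M, ‖f (k + (T+1))‖
      ≤ ‖w‖ * a (T+1) := by
    intro M
    have step : ∀ k : ℕ, ‖f (k + (T+1))‖
        ≤ ‖w‖ * (a (k + (T+1)) - a (k + 1 + (T+1))) := by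
      intro k
      have h1 : T + 1 ≤ k + (T+1) := by omega
      have h2 := htail (k + (T+1)) h1
      have h3 := telescope (k + (T+1)) (by omega)
      have h4 : a (k + (T+1)) - a (k + 1 + (T+1))
          = (Real.log (k + (T+1) : ℕ) + 2) / ((k + (T+1) : ℕ):ℝ)
            - (Real.log (((k + (T+1) : ℕ):ℝ) + 1) + 2) / (((k + (T+1) : ℕ):ℝ) + 1) := by
        rw [hadef]
        push_cast
        ring_nf
      have h5 : ‖w‖ * Real.log (k + (T+1) : ℕ) / ((k + (T+1) : ℕ):ℝ)^2
          ≤ ‖w‖ * (a (k + (T+1)) - a (k + 1 + (T+1))) := by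
        rw [h4, mul_div_assoc]
        exact mul_le_mul_of_nonneg_left h3 hw0
      exact h2.trans h5
    calc ∑ k ∈ range M, ‖f (k + (T+1))‖
        ≤ ∑ k ∈ range M, ‖w‖ * (a (k + (T+1)) - a (k + 1 + (T+1))) :=
          Finset.sum_le_sum fun k _ => step k
      _ = ‖w‖ * ∑ k ∈ range M, ((fun j => a (j + (T+1))) k - (fun j => a (j + (T+1))) (k+1)) := by
          rw [Finset.mul_sum]
      _ = ‖w‖ * (a (0 + (T+1)) - a (M + (T+1))) := by rw [Finset.sum_range_sub']
      _ ≤ ‖w‖ * a (T+1) := by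
          have := ha_nonneg (M + (T+1))
          have h0 : (0:ℕ) + (T+1) = T+1 := by omega
          rw [h0]
          nlinarith
  have hg : Summable fun k => ‖f (k + (T+1))‖ :=
    summable_of_sum_range_le (fun k => norm_nonneg _) hg_partial
  have hsumnorm : Summable fun n => ‖f n‖ := (summable_nat_add_iff (T+1)).1 hg
  have hfsum : Summable f := hsumnorm.of_norm
  -- head sum bound
  have hlogT2 : Real.log T ≤ 2 * L := by
    have h1 : (T:ℝ) ≤ (‖w‖ + 2)^2 := by nlinarith
    have h2 : Real.log ((‖w‖ + 2)^2) = 2 * L := by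
      rw [Real.log_pow, hLdef]; push_cast; ring
    have h3 : Real.log T ≤ Real.log ((‖w‖ + 2)^2) := Real.log_le_log (by linarith) h1
    linarith
  have hhead_sum : ∑ i ∈ range (T+1), ‖f i‖ ≤ 8 * P * L := by
    have h1 : ∑ i ∈ range (T+1), ‖f i‖ ≤ ∑ i ∈ range (T+1), 2 * P * (Λ i / i) :=
      Finset.sum_le_sum fun i _ => hhead i
    have h2 : ∑ i ∈ range (T+1), (Λ i / (i:ℝ)) = ∑ i ∈ Icc 1 T, Λ i / i := by
      refine (Finset.sum_subset ?_ ?_).symm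
      · intro x hx
        rw [mem_Icc] at hx
        rw [mem_range]
        omega
      · intro x hx hnx
        rw [mem_range] at hx
        rw [mem_Icc] at hnx
        have : x = 0 := by omega
        subst this
        simp
    have h3 := mertens T (by omega)
    have hlogT0 : 0 ≤ Real.log T := Real.log_nonneg (by
      have : (2:ℝ) ≤ (T:ℝ) := by linarith
      linarith)
    calc ∑ i ∈ range (T+1), ‖f i‖ ≤ 2 * P * ∑ i ∈ range (T+1), (Λ i / (i:ℝ)) := by
          rw [Finset.mul_sum] at *
          convert h1 using 2
      _ = 2 * P * ∑ i ∈ Icc 1 T, (Λ i / (i:ℝ)) := by rw [h2]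
      _ ≤ 2 * P * (2 * Real.log T) := by
          refine mul_le_mul_of_nonneg_left h3 (by positivity)
      _ ≤ 2 * P * (2 * (2 * L)) := by
          refine mul_le_mul_of_nonneg_left (by linarith) (by positivity)
      _ = 8 * P * L := by ring
  -- tail sum bound
  have htail_sum : (∑' k, ‖f (k + (T+1))‖) ≤ 6 * P * L := by
    have h1 : (∑' k, ‖f (k + (T+1))‖) ≤ ‖w‖ * a (T+1) :=
      hg.tsum_le_of_sum_range_le hg_partial
    have hT1 : (((T+1 : ℕ)):ℝ) = (T:ℝ) + 1 := by push_cast; ring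
    have h2 : ‖w‖ * a (T+1) ≤ 6 * L := by
      rw [hadef]
      simp only [hT1]
      have hT1pos : (0:ℝ) < (T:ℝ) + 1 := by linarith
      have hlog : Real.log ((T:ℝ) + 1) ≤ 2 * L := by
        have ha1 : (T:ℝ) + 1 ≤ (‖w‖ + 2)^2 := by nlinarith
        have h2' : Real.log ((‖w‖ + 2)^2) = 2 * L := by
          rw [Real.log_pow, hLdef]; push_cast; ring
        have h3' := Real.log_le_log (by linarith) ha1
        linarith
      have hwle : ‖w‖ ≤ (T:ℝ) + 1 := by linarith
      rw [mul_div_assoc'] at *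
      rw [div_le_iff₀ hT1pos]
      have hlog0 : 0 ≤ Real.log ((T:ℝ)+1) := Real.log_nonneg (by linarith)
      nlinarith
    have h3 : 6 * L ≤ 6 * P * L := by nlinarith
    linarith
  -- combine
  have hsplit : (∑' n, ‖f n‖)
      = ∑ i ∈ range (T+1), ‖f i‖ + ∑' k, ‖f (k + (T+1))‖ :=
    (hsumnorm.sum_add_tsum_nat_add (T+1)).symm
  calc ‖∑' n, f n‖ ≤ ∑' n, ‖f n‖ := norm_tsum_le_tsum_norm hsumnorm
    _ = ∑ i ∈ range (T+1), ‖f i‖ + ∑' k, ‖f (k + (T+1))‖ := hsplit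
    _ ≤ 8 * P * L + 6 * P * L := add_le_add hhead_sum htail_sum
    _ = 14 * P * L := by ring
    _ ≤ 20 * P * L := by
        have hPL : 0 ≤ P * L := mul_nonneg (by linarith) (by linarith)
        nlinarith
end

section
/- For every complex number w with |w| > 1 and every real N ≥ 4, one has |∫_0^1 ((1 - ξ/N)^w - 1) dξ/ξ| ≪ 2^{|Re w|} log(|w| + 2), with an absolute implied constant. -/
open MeasureTheory intervalIntegral
theorem stmt_6 :
    ∃ C > 0, ∀ (w : ℂ) (N : ℝ), 1 < ‖w‖ → 4 ≤ N →
      ‖∫ ξ in (0:ℝ)..1, ((((1 : ℝ) - ξ / N : ℝ) : ℂ) ^ w - 1) / (ξ : ℂ)‖ ≤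
        C * (2 : ℝ) ^ |w.re| * Real.log (‖w‖ + 2) := by
  refine ⟨3, by norm_num, fun w N hw hN => ?_⟩
  set f : ℝ → ℂ := fun ξ => ((((1 : ℝ) - ξ / N : ℝ) : ℂ) ^ w - 1) / (ξ : ℂ) with hf
  have hw0 : (0:ℝ) < ‖w‖ := by linarith
  set δ : ℝ := 1 / ‖w‖ with hδ
  have hδ0 : 0 < δ := by positivity
  have hδ1 : δ < 1 := by rw [hδ, div_lt_one hw0]; exact hw
  have hN0 : (0:ℝ) < N := by linarith
  have hbase : ∀ ξ : ℝ, 0 ≤ ξ → ξ ≤ 1 → (3/4 : ℝ) ≤ 1 - ξ / N := by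
    intro ξ h0 h1
    have : ξ / N ≤ 1 / 4 := div_le_div₀ (by norm_num) h1 (by norm_num) hN
    linarith
  have hbasepos : ∀ ξ : ℝ, 0 ≤ ξ → ξ ≤ 1 → (0:ℝ) < 1 - ξ / N := fun ξ h0 h1 => by
    linarith [hbase ξ h0 h1]
  have h2pow1 : (1:ℝ) ≤ (2:ℝ) ^ |w.re| := Real.one_le_rpow (by norm_num) (abs_nonneg _)
  have hrpow : ∀ ξ : ℝ, 0 ≤ ξ → ξ ≤ 1 → (1 - ξ / N) ^ w.re ≤ (2:ℝ) ^ |w.re| := by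
    intro ξ h0 h1
    have hb := hbase ξ h0 h1
    have hbp := hbasepos ξ h0 h1
    have hd : (0:ℝ) ≤ ξ / N := by positivity
    have hble : (1 - ξ / N : ℝ) ≤ 1 := by linarith
    rcases le_or_gt 0 w.re with hre | hre
    · exact (Real.rpow_le_one hbp.le hble hre).trans h2pow1
    · have h2 : (1 - ξ / N) ^ w.re ≤ (1/2 : ℝ) ^ w.re :=
        Real.rpow_le_rpow_of_nonpos (by norm_num) (by linarith) hre.le
      have h3 : ((1:ℝ)/2) ^ w.re = (2:ℝ) ^ (-w.re) := by
        rw [one_div, Real.inv_rpow (by norm_num), ← Real.rpow_neg (by norm_num)]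
      rw [abs_of_neg hre]
      exact h2.trans h3.le
  -- continuity of f away from 0
  have hcont : ∀ ξ : ℝ, 0 < ξ → ξ ≤ 1 → ContinuousAt f ξ := by
    intro ξ hξ0 hξ1
    have hbp := hbasepos ξ hξ0.le hξ1
    apply ContinuousAt.div
    · apply ContinuousAt.sub _ continuousAt_const
      apply ContinuousAt.cpow (by fun_prop) continuousAt_const
      rw [Complex.mem_slitPlane_iff]
      left; simpa using hbp
    · fun_prop
    · exact_mod_cast hξ0.ne'
  -- pointwise bound on (0, δ]
  have hbd1 : ∀ ξ : ℝ, 0 < ξ → ξ ≤ δ → ‖f ξ‖ ≤ ‖w‖ := by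
    intro ξ hξ0 hξδ
    have hξ1 : ξ ≤ 1 := hξδ.trans hδ1.le
    have hbp := hbasepos ξ hξ0.le hξ1
    have hb := hbase ξ hξ0.le hξ1
    have hd : (0:ℝ) ≤ ξ / N := by positivity
    set L : ℝ := Real.log (1 - ξ / N) with hL
    have hLneg : L ≤ 0 := Real.log_nonpos (by linarith) (by linarith)
    have hinv : (1 - ξ/N)⁻¹ - 1 = (ξ/N) / (1 - ξ/N) := by
      rw [eq_div_iff hbp.ne', sub_mul, inv_mul_cancel₀ hbp.ne']
      ring
    have key : -L ≤ (ξ/N) / (1 - ξ/N) := by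
      have h5 := Real.log_le_sub_one_of_pos (x := (1 - ξ/N)⁻¹) (by positivity)
      rw [Real.log_inv, hinv] at h5
      exact h5
    have hLle : |L| ≤ 2 * (ξ / N) := by
      have h6 : (ξ/N) / (1 - ξ/N) ≤ 2 * (ξ/N) := by
        rw [div_le_iff₀ hbp]
        nlinarith
      rw [abs_of_nonpos hLneg]; linarith
    have hLξ : |L| ≤ ξ / 2 := by
      have h7 : 2 * (ξ / N) ≤ ξ / 2 := by
        rw [mul_div_assoc', div_le_div_iff₀ hN0 (by norm_num : (0:ℝ) < 2)]
        nlinarith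
      linarith
    have hexp : (((1:ℝ) - ξ / N : ℝ) : ℂ) ^ w = Complex.exp ((L : ℂ) * w) := by
      rw [Complex.cpow_def_of_ne_zero (by exact_mod_cast hbp.ne'), Complex.ofReal_log hbp.le]
    have hδξ : ξ * ‖w‖ ≤ 1 := by
      have : ξ ≤ 1 / ‖w‖ := hξδ
      rw [le_div_iff₀ hw0] at this
      exact this
    have hz : ‖(L : ℂ) * w‖ ≤ 1 := by
      rw [norm_mul, Complex.norm_real]
      calc ‖L‖ * ‖w‖ ≤ (ξ/2) * ‖w‖ := by
            apply mul_le_mul_of_nonneg_right _ hw0.le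
            simpa [Real.norm_eq_abs] using hLξ
        _ ≤ 1/2 := by nlinarith
        _ ≤ 1 := by norm_num
    have hnum : ‖(((1:ℝ) - ξ / N : ℝ) : ℂ) ^ w - 1‖ ≤ ξ * ‖w‖ := by
      rw [hexp]
      calc ‖Complex.exp ((L:ℂ)*w) - 1‖ ≤ 2 * ‖(L:ℂ)*w‖ := by
            simpa using
              Complex.norm_exp_sub_one_le (x := (L:ℂ)*w)
                (by simpa using hz)
        _ = 2 * (|L| * ‖w‖) := by rw [norm_mul, Complex.norm_real, Real.norm_eq_abs]
        _ ≤ 2 * ((ξ/2) * ‖w‖) := by nlinarith [abs_nonneg L]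
        _ = ξ * ‖w‖ := by ring
    have hnf : ‖f ξ‖ = ‖(((1:ℝ) - ξ / N : ℝ) : ℂ) ^ w - 1‖ / ξ := by
      simp only [hf, norm_div, Complex.norm_real, Real.norm_eq_abs, abs_of_pos hξ0]
    rw [hnf, div_le_iff₀ hξ0]
    exact hnum.trans_eq (mul_comm ξ ‖w‖)
  -- pointwise bound on [δ, 1]
  have hbd2 : ∀ ξ : ℝ, 0 < ξ → ξ ≤ 1 → ‖f ξ‖ ≤ 2 * (2:ℝ) ^ |w.re| * (1/ξ) := by
    intro ξ hξ0 hξ1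
    have hbp := hbasepos ξ hξ0.le hξ1
    have hnorm : ‖(((1:ℝ) - ξ / N : ℝ) : ℂ) ^ w‖ = (1 - ξ/N) ^ w.re := by
      rw [Complex.norm_cpow_eq_rpow_re_of_pos hbp]
    have hnum : ‖(((1:ℝ) - ξ / N : ℝ) : ℂ) ^ w - 1‖ ≤ 2 * (2:ℝ) ^ |w.re| := by
      calc ‖(((1:ℝ) - ξ / N : ℝ) : ℂ) ^ w - 1‖
          ≤ ‖(((1:ℝ) - ξ / N : ℝ) : ℂ) ^ w‖ + ‖(1:ℂ)‖ := norm_sub_le _ _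
        _ ≤ (2:ℝ) ^ |w.re| + 1 := by
            rw [hnorm, norm_one]
            exact add_le_add_left (hrpow ξ hξ0.le hξ1) 1
        _ ≤ 2 * (2:ℝ) ^ |w.re| := by linarith
    have hnf : ‖f ξ‖ = ‖(((1:ℝ) - ξ / N : ℝ) : ℂ) ^ w - 1‖ / ξ := by
      simp only [hf, norm_div, Complex.norm_real, Real.norm_eq_abs, abs_of_pos hξ0]
    rw [hnf, mul_one_div]
    gcongr
  -- integrability on [0, δ]
  have hint1 : IntervalIntegrable f volume 0 δ := by
    rw [intervalIntegrable_iff, Set.uIoc_of_le hδ0.le]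
    refine ⟨ContinuousOn.aestronglyMeasurable ?_ measurableSet_Ioc, ?_⟩
    · intro ξ hξ
      exact (hcont ξ hξ.1 (hξ.2.trans hδ1.le)).continuousWithinAt
    · apply MeasureTheory.HasFiniteIntegral.restrict_of_bounded (C := ‖w‖)
        (measure_Ioc_lt_top)
      filter_upwards [ae_restrict_mem measurableSet_Ioc] with ξ hξ
      exact hbd1 ξ hξ.1 hξ.2
  -- integrability on [δ, 1]
  have hcontIcc : ContinuousOn f (Set.Icc δ 1) := by
    intro ξ hξ
    exact (hcont ξ (hδ0.trans_le hξ.1) hξ.2).continuousWithinAt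
  have hint2 : IntervalIntegrable f volume δ 1 :=
    hcontIcc.intervalIntegrable_of_Icc hδ1.le
  have hsplit : ∫ ξ in (0:ℝ)..1, f ξ = (∫ ξ in (0:ℝ)..δ, f ξ) + ∫ ξ in δ..1, f ξ :=
    (integral_add_adjacent_intervals hint1 hint2).symm
  have hp1 : ‖∫ ξ in (0:ℝ)..δ, f ξ‖ ≤ 1 := by
    have h8 := norm_integral_le_of_norm_le_const (C := ‖w‖) (f := f) (a := 0) (b := δ)
      (fun ξ hξ => by
        rw [Set.uIoc_of_le hδ0.le] at hξ
        exact hbd1 ξ hξ.1 hξ.2)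
    calc ‖∫ ξ in (0:ℝ)..δ, f ξ‖ ≤ ‖w‖ * |δ - 0| := h8
      _ = 1 := by rw [sub_zero, abs_of_pos hδ0, hδ, mul_one_div, div_self hw0.ne']
  have hg : IntervalIntegrable (fun ξ : ℝ => 2 * (2:ℝ) ^ |w.re| * (1/ξ)) volume δ 1 := by
    apply ContinuousOn.intervalIntegrable_of_Icc hδ1.le
    apply continuousOn_const.mul
    apply continuousOn_const.div continuousOn_id
    intro ξ hξ; exact (hδ0.trans_le hξ.1).ne'
  have hfn : IntervalIntegrable (fun ξ => ‖f ξ‖) volume δ 1 :=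
    (hcontIcc.norm).intervalIntegrable_of_Icc hδ1.le
  have hp2 : ‖∫ ξ in δ..1, f ξ‖ ≤ 2 * (2:ℝ) ^ |w.re| * Real.log ‖w‖ := by
    calc ‖∫ ξ in δ..1, f ξ‖ ≤ ∫ ξ in δ..1, ‖f ξ‖ := norm_integral_le_integral_norm hδ1.le
      _ ≤ ∫ ξ in δ..1, 2 * (2:ℝ) ^ |w.re| * (1/ξ) := by
          apply integral_mono_on hδ1.le hfn hg
          intro ξ hξ
          exact hbd2 ξ (hδ0.trans_le hξ.1) hξ.2
      _ = 2 * (2:ℝ) ^ |w.re| * ∫ ξ in δ..1, 1/ξ := integral_const_mul _ _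
      _ = 2 * (2:ℝ) ^ |w.re| * Real.log ‖w‖ := by
          rw [integral_one_div_of_pos hδ0 one_pos, hδ, one_div_one_div]
  have hlog2 : 1 ≤ Real.log (‖w‖ + 2) := by
    rw [Real.le_log_iff_exp_le (by linarith)]
    calc Real.exp 1 ≤ 2.7182818286 := Real.exp_one_lt_d9.le
      _ ≤ ‖w‖ + 2 := by linarith
  have hloglog : Real.log ‖w‖ ≤ Real.log (‖w‖ + 2) :=
    Real.log_le_log hw0 (by linarith)
  calc ‖∫ ξ in (0:ℝ)..1, f ξ‖
      ≤ ‖∫ ξ in (0:ℝ)..δ, f ξ‖ + ‖∫ ξ in δ..1, f ξ‖ := by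
        rw [hsplit]; exact norm_add_le _ _
    _ ≤ 1 + 2 * (2:ℝ) ^ |w.re| * Real.log ‖w‖ := add_le_add hp1 hp2
    _ ≤ 3 * (2:ℝ) ^ |w.re| * Real.log (‖w‖ + 2) := by
        nlinarith [Real.log_nonneg (by linarith : (1:ℝ) ≤ ‖w‖)]
end

section
/- Let N ≥ 4 be an integer and w a complex number with Re w > 0. Then (1/Γ(w+1)) ∫_1^2 (1 - 1/ξ)^w ξ dξ/(N² - ξ²) = (2^{-(w+1)}/Γ(w+1)) ∑_{m=0}^∞ a_N(m) 2^{-m}/(w+1+m), where a_N(m) are the Taylor coefficients of h_N(z) = 1/((1-z)(N²(1-z)²-1)) at 0. -/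
open MeasureTheory Set intervalIntegral

theorem stmt_10 (N : ℕ) (hN : 4 ≤ N) (w : ℂ) (hw : 0 < w.re) (a : ℕ → ℂ)
    (ha : ∀ z : ℂ, ‖z‖ < 1 - 1 / (N : ℝ) →
      HasSum (fun m : ℕ => a m * z ^ m)
        (1 / ((1 - z) * ((N : ℂ) ^ 2 * (1 - z) ^ 2 - 1)))) :
    (1 / Complex.Gamma (w + 1)) *
        ∫ ξ in (1:ℝ)..2, (((1 : ℝ) - 1 / ξ : ℝ) : ℂ) ^ w * (ξ : ℂ) /
          ((N : ℂ) ^ 2 - (ξ : ℂ) ^ 2) =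
      ((2 : ℂ) ^ (-(w + 1)) / Complex.Gamma (w + 1)) *
        ∑' m : ℕ, a m * (2 : ℂ) ^ (-(m : ℤ)) / (w + 1 + m) := by
  have hw0 : w ≠ 0 := fun h => by simp [h] at hw
  have hN4 : (4:ℝ) ≤ (N:ℝ) := by exact_mod_cast hN
  have hhalf : (1/2 : ℝ) < 1 - 1/(N:ℝ) := by
    have h4 : (0:ℝ) < 4 := by norm_num
    have : 1/(N:ℝ) ≤ 1/4 := one_div_le_one_div_of_le h4 hN4
    linarith
  -- the integrand as a function
  set g : ℝ → ℂ := fun ξ => (((1 : ℝ) - 1 / ξ : ℝ) : ℂ) ^ w * (ξ : ℂ) /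
      ((N : ℂ) ^ 2 - (ξ : ℂ) ^ 2) with hgdef
  -- limit function after substitution
  set F : ℝ → ℂ := fun x => ((x:ℝ):ℂ) ^ w *
      (1 / ((1 - (x:ℂ)) * ((N : ℂ) ^ 2 * (1 - (x:ℂ)) ^ 2 - 1))) with hFdef
  -- continuity of g on [1,2]
  have hgc : ContinuousOn g (Icc (1:ℝ) 2) := by
    intro ξ hξ
    have hξ0 : ξ ≠ 0 := by intro h; rw [h] at hξ; exact absurd hξ.1 (by norm_num)
    have hc1 : ContinuousAt (fun t : ℝ => ((t:ℝ):ℂ) ^ w) (1 - 1/ξ) :=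
      Complex.continuousAt_ofReal_cpow_const _ _ (Or.inl hw)
    have hc2 : ContinuousAt (fun ξ : ℝ => 1 - 1/ξ) ξ :=
      continuousAt_const.sub (continuousAt_const.div continuousAt_id hξ0)
    have hc12 : ContinuousAt (fun ξ : ℝ => (((1:ℝ) - 1/ξ : ℝ):ℂ) ^ w) ξ :=
      ContinuousAt.comp (g := fun t : ℝ => ((t:ℝ):ℂ) ^ w) (f := fun ξ : ℝ => 1 - 1/ξ) hc1 hc2
    have hden : ((N:ℂ)^2 - (ξ:ℂ)^2) ≠ 0 := by
      have h : (0:ℝ) < (N:ℝ)^2 - ξ^2 := by nlinarith [hξ.1, hξ.2, hN4]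
      rw [show ((N:ℂ)^2 - (ξ:ℂ)^2) = (((N:ℝ)^2 - ξ^2 : ℝ):ℂ) by push_cast; ring]
      exact Complex.ofReal_ne_zero.mpr h.ne'
    exact ((hc12.mul Complex.continuous_ofReal.continuousAt).div
      (continuous_const.sub (Complex.continuous_ofReal.pow 2)).continuousAt hden).continuousWithinAt
  -- substitution ξ = 1/(1-x)
  have hsub : (∫ ξ in (1:ℝ)..2, g ξ)
      = ∫ x in (0:ℝ)..(1/2:ℝ), ((1-x)^2)⁻¹ • g ((1-x)⁻¹) := by
    have hderiv : ∀ x ∈ uIcc (0:ℝ) (1/2), HasDerivAt (fun x : ℝ => (1-x)⁻¹) (((1-x)^2)⁻¹) x := by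
      intro x hx
      rw [uIcc_of_le (by norm_num)] at hx
      have h1 : (1:ℝ) - x ≠ 0 := by have := hx.2; intro h; norm_num at h; linarith
      have := ((hasDerivAt_id x).const_sub 1).inv h1
      exact this.congr_deriv (by simp)
    have hf'c : ContinuousOn (fun x : ℝ => ((1-x)^2)⁻¹) (uIcc (0:ℝ) (1/2)) := by
      apply ContinuousOn.inv₀
      · exact ((continuousOn_const.sub continuousOn_id).pow 2)
      · intro x hx
        rw [uIcc_of_le (by norm_num)] at hx
        have h1 : (0:ℝ) < 1 - x := by linarith [hx.2]
        positivity
    have himg : (fun x : ℝ => (1-x)⁻¹) '' (uIcc (0:ℝ) (1/2)) ⊆ Icc (1:ℝ) 2 := by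
      rintro _ ⟨x, hx, rfl⟩
      rw [uIcc_of_le (by norm_num)] at hx
      have h1 : (0:ℝ) < 1 - x := by linarith [hx.2]
      show (1-x)⁻¹ ∈ Icc (1:ℝ) 2
      rw [inv_eq_one_div]
      constructor
      · rw [le_div_iff₀ h1]; linarith [hx.1]
      · rw [div_le_iff₀ h1]; linarith [hx.2]
    have := integral_comp_smul_deriv' hderiv hf'c (hgc.mono himg)
    simp only [Function.comp] at this
    rw [show (1 - (0:ℝ))⁻¹ = 1 by norm_num, show (1 - (1/2:ℝ))⁻¹ = 2 by norm_num] at this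
    exact this.symm
  -- pointwise identity on [0, 1/2]
  have hi2 : (∫ x in (0:ℝ)..(1/2:ℝ), ((1-x)^2)⁻¹ • g ((1-x)⁻¹))
      = ∫ x in (0:ℝ)..(1/2:ℝ), F x := by
    apply intervalIntegral.integral_congr
    intro x hx
    rw [uIcc_of_le (by norm_num)] at hx
    have h1 : (0:ℝ) < 1 - x := by linarith [hx.2]
    have hA : (2:ℝ) ≤ (N:ℝ)*(1-x) := by
      nlinarith [hx.1, hx.2, mul_nonneg (by linarith : (0:ℝ) ≤ (N:ℝ)-4) (by linarith [hx.2] : (0:ℝ) ≤ 1-x)]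
    have hreal : (0:ℝ) < (N:ℝ)^2*(1-x)^2 - 1 := by nlinarith [hA, hx.1, hx.2]
    have hb : (1 - 1/(1-x)⁻¹ : ℝ) = x := by rw [one_div, inv_inv]; ring
    have hc1 : ((1:ℂ) - x) ≠ 0 := by
      rw [show (1:ℂ) - x = ((1-x:ℝ):ℂ) by push_cast; ring]
      exact Complex.ofReal_ne_zero.mpr h1.ne'
    have hc2 : (N:ℂ)^2*(1-(x:ℂ))^2 - 1 ≠ 0 := by
      rw [show (N:ℂ)^2*(1-(x:ℂ))^2-1 = (((N:ℝ)^2*(1-x)^2-1 : ℝ):ℂ) by push_cast; ring]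
      exact Complex.ofReal_ne_zero.mpr hreal.ne'
    simp only [hgdef, hFdef, hb]
    rw [Complex.real_smul]
    have hc3 : (N:ℂ)^2 - ((((1-x)⁻¹ : ℝ)):ℂ)^2 ≠ 0 := by
      rw [show ((((1-x)⁻¹ : ℝ)):ℂ) = ((1:ℂ)-x)⁻¹ by push_cast; ring]
      rw [show (N:ℂ)^2 - ((1:ℂ)-x)⁻¹^2 = ((N:ℂ)^2*(1-(x:ℂ))^2-1)/((1-(x:ℂ))^2) by
        field_simp]
      exact div_ne_zero hc2 (pow_ne_zero 2 hc1)
    push_cast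
    field_simp
    all_goals ring
  -- series machinery
  have hle : (0:ℝ) ≤ 1/2 := by norm_num
  have hint : ∀ m : ℕ, IntervalIntegrable
      (fun x : ℝ => ((x:ℝ):ℂ)^w * (a m * ((x:ℝ):ℂ)^m)) volume 0 (1/2) := by
    intro m
    exact (intervalIntegrable_cpow (r := w) (Or.inl hw.le)).mul_continuousOn
      (continuousOn_const.mul ((Complex.continuous_ofReal.pow m).continuousOn))
  have hIoc : ∀ m : ℕ, IntegrableOn
      (fun x : ℝ => ((x:ℝ):ℂ)^w * (a m * ((x:ℝ):ℂ)^m)) (Ioc (0:ℝ) (1/2)) volume :=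
    fun m => (hint m).1
  have hnormbd : ∀ m : ℕ, ∀ x ∈ Ioc (0:ℝ) (1/2),
      ‖((x:ℝ):ℂ)^w * (a m * ((x:ℝ):ℂ)^m)‖ ≤ ‖a m‖ * (1/2:ℝ)^m := by
    intro m x hx
    have hx0 : (0:ℝ) < x := hx.1
    rw [norm_mul, norm_mul,
      Complex.norm_cpow_eq_rpow_re_of_pos hx0]
    have h1 : x ^ w.re ≤ 1 := Real.rpow_le_one hx0.le (by linarith [hx.2]) hw.le
    have h2 : ‖((x:ℝ):ℂ)^m‖ ≤ (1/2:ℝ)^m := by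
      rw [norm_pow, Complex.norm_real, Real.norm_eq_abs, abs_of_pos hx0]
      exact pow_le_pow_left₀ hx0.le hx.2 m
    calc x ^ w.re * (‖a m‖ * ‖((x:ℝ):ℂ)^m‖) ≤ 1 * (‖a m‖ * (1/2:ℝ)^m) := by
          apply mul_le_mul h1 (mul_le_mul_of_nonneg_left h2 (norm_nonneg _))
            (by positivity) (by norm_num)
      _ = ‖a m‖ * (1/2:ℝ)^m := by ring
  have hintbd : ∀ m : ℕ, (∫ x in Ioc (0:ℝ) (1/2), ‖((x:ℝ):ℂ)^w * (a m * ((x:ℝ):ℂ)^m)‖)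
      ≤ (1/2) * (‖a m‖ * (1/2:ℝ)^m) := by
    intro m
    have hconst : IntegrableOn (fun _ : ℝ => ‖a m‖ * (1/2:ℝ)^m) (Ioc (0:ℝ) (1/2)) volume := by
      apply integrableOn_const (hs := ?_)
      rw [Real.volume_Ioc]
      exact ENNReal.ofReal_ne_top
    calc (∫ x in Ioc (0:ℝ) (1/2), ‖((x:ℝ):ℂ)^w * (a m * ((x:ℝ):ℂ)^m)‖)
        ≤ ∫ _ in Ioc (0:ℝ) (1/2), (‖a m‖ * (1/2:ℝ)^m) :=
          setIntegral_mono_on ((hIoc m).norm) hconst measurableSet_Ioc (hnormbd m)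
      _ = (1/2) * (‖a m‖ * (1/2:ℝ)^m) := by
          rw [setIntegral_const, Real.volume_real_Ioc, smul_eq_mul]
          norm_num [ENNReal.toReal_ofReal]
  have hsummm : Summable (fun m : ℕ => ‖a m‖ * (1/2:ℝ)^m) := by
    have hz : ‖(((1:ℝ)/2 : ℝ):ℂ)‖ < 1 - 1/(N:ℝ) := by
      rw [Complex.norm_real, Real.norm_eq_abs, abs_of_pos (by norm_num : (0:ℝ) < 1/2)]
      exact hhalf
    have h := summable_norm_iff.mpr (ha _ hz).summable
    have heq : ∀ m : ℕ, ‖a m * (((1:ℝ)/2 : ℝ):ℂ)^m‖ = ‖a m‖ * (1/2:ℝ)^m := by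
      intro m
      rw [norm_mul, norm_pow, Complex.norm_real, Real.norm_eq_abs,
        abs_of_pos (by norm_num : (0:ℝ) < 1/2)]
    simpa only [heq] using h
  have hsumint : Summable (fun m : ℕ =>
      ∫ x in Ioc (0:ℝ) (1/2), ‖((x:ℝ):ℂ)^w * (a m * ((x:ℝ):ℂ)^m)‖) := by
    apply Summable.of_nonneg_of_le
      (fun m => integral_nonneg (fun x => norm_nonneg _)) hintbd
    exact hsummm.mul_left (1/2)
  -- interchange sum and integral
  have hkey : (∑' m : ℕ, ∫ x in Ioc (0:ℝ) (1/2), ((x:ℝ):ℂ)^w * (a m * ((x:ℝ):ℂ)^m))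
      = ∫ x in Ioc (0:ℝ) (1/2), F x := by
    rw [integral_tsum_of_summable_integral_norm hIoc hsumint]
    apply setIntegral_congr_fun measurableSet_Ioc
    intro x hx
    have hxz : ‖((x:ℝ):ℂ)‖ < 1 - 1/(N:ℝ) := by
      rw [Complex.norm_real, Real.norm_eq_abs, abs_of_pos hx.1]
      linarith [hx.2]
    exact ((ha _ hxz).mul_left (((x:ℝ):ℂ)^w)).tsum_eq
  -- per-term evaluation
  have hterm : ∀ m : ℕ, (∫ x in Ioc (0:ℝ) (1/2), ((x:ℝ):ℂ)^w * (a m * ((x:ℝ):ℂ)^m))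
      = (2:ℂ)^(-(w+1)) * (a m * (2:ℂ)^(-(m:ℤ)) / (w + 1 + m)) := by
    intro m
    have hre : (0:ℝ) < (w + (m:ℂ)).re := by
      rw [Complex.add_re, Complex.natCast_re]
      positivity
    have hre1 : (0:ℝ) < (w + (m:ℂ) + 1).re := by
      rw [Complex.add_re, Complex.one_re]
      linarith
    have hwm0 : w + (m:ℂ) ≠ 0 := fun h => by rw [h] at hre; simp at hre
    have hwm1 : w + (m:ℂ) + 1 ≠ 0 := fun h => by rw [h] at hre1; simp at hre1
    rw [← intervalIntegral.integral_of_le hle]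
    have h1 : EqOn (fun x : ℝ => ((x:ℝ):ℂ)^w * (a m * ((x:ℝ):ℂ)^m))
        (fun x : ℝ => a m * ((x:ℝ):ℂ)^(w + (m:ℂ))) (uIcc (0:ℝ) (1/2)) := by
      intro x _
      show ((x:ℝ):ℂ)^w * (a m * ((x:ℝ):ℂ)^m) = a m * ((x:ℝ):ℂ)^(w + (m:ℂ))
      rcases eq_or_ne x 0 with rfl | hx0
      · simp only [Complex.ofReal_zero, Complex.zero_cpow hw0, Complex.zero_cpow hwm0]
        ring
      · rw [Complex.cpow_add _ _ (Complex.ofReal_ne_zero.mpr hx0), Complex.cpow_natCast]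
        ring
    rw [intervalIntegral.integral_congr h1, intervalIntegral.integral_const_mul,
      integral_cpow (Or.inl (by linarith : (-1:ℝ) < (w + (m:ℂ)).re))]
    rw [Complex.ofReal_zero, Complex.zero_cpow hwm1, sub_zero]
    have harg : (2:ℂ).arg ≠ Real.pi := by
      rw [show (2:ℂ) = ((2:ℝ):ℂ) by norm_num, Complex.arg_ofReal_of_nonneg (by norm_num)]
      exact Real.pi_ne_zero.symm
    have e1 : (((1:ℝ)/2 : ℝ):ℂ) = (2:ℂ)⁻¹ := by norm_num
    rw [e1, Complex.inv_cpow _ _ harg, ← Complex.cpow_neg,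
      show -(w + (m:ℂ) + 1) = -(w+1) + (Int.cast (-(m:ℤ)) : ℂ) by push_cast; ring,
      Complex.cpow_add _ _ two_ne_zero, Complex.cpow_intCast]
    ring
  -- assemble
  rw [hsub, hi2, intervalIntegral.integral_of_le hle, ← hkey, tsum_congr hterm,
    tsum_mul_left]
  ring
end
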